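/- Every strongly connected tournament is 2*-weakly connected; that is, for every pair of distinct vertices x, y of a strongly connected tournament T, there exist two internally disjoint directed paths between x and y (each directed from x to y or from y to x) whose union contains every vertex of T. -/

import Mathlib

variable {V : Type*}

/-- A tournament relation: irreflexive, and between any two distinct vertices
exactly one of the two possible arcs is present. -/
def IsTournament (r : V → V → Prop) : Prop :=
  (∀ v : V, ¬ r v v) ∧ ∀ u v : V, u ≠ v → (r u v ↔ ¬ r v u)

/-- Strong connectivity: every vertex reaches every other by a directed walk. -/
def StronglyConnected (r : V → V → Prop) : Prop :=
  ∀ u v : V, Relation.ReflTransGen r u v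

/-- `k`-strong: at least `k+1` vertices, and deleting any set of fewer than `k`
vertices leaves a strongly connected digraph. -/
def KStrong [Fintype V] (r : V → V → Prop) (k : ℕ) : Prop :=
  k + 1 ≤ Fintype.card V ∧
    ∀ S : Set V, S.ncard < k → ∀ u v : V, u ∉ S → v ∉ S →
      Relation.ReflTransGen (fun a b => a ∉ S ∧ b ∉ S ∧ r a b) u v

/-- A directed path from `u` to `v`, recorded as its (nodup) list of vertices. -/
def IsDipath (r : V → V → Prop) (u v : V) (p : List V) : Prop :=
  p.Chain' r ∧ p.Nodup ∧ p.head? = some u ∧ p.getLast? = some v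

/-- A Hamiltonian directed path from `u` to `v`: a directed path containing
every vertex. -/
def IsHamDipath (r : V → V → Prop) (u v : V) (p : List V) : Prop :=
  IsDipath r u v p ∧ ∀ w : V, w ∈ p

/-- A family of paths between `x` and `y` is internally disjoint if two distinct
paths share no vertex other than `x` and `y`. -/
def InternallyDisjoint (x y : V) {k : ℕ} (ps : Fin k → List V) : Prop :=
  ∀ i j : Fin k, i ≠ j → ∀ w : V, w ∈ ps i → w ∈ ps j → w = x ∨ w = y

/-- A strong `k*`-container between `x` and `y`: `k` internally disjoint directed
paths, all from `x` to `y` or all from `y` to `x`, whose union contains every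
vertex. -/
def StrongStarContainer (r : V → V → Prop) (x y : V) (k : ℕ) : Prop :=
  ∃ ps : Fin k → List V, Function.Injective ps ∧
    ((∀ i, IsDipath r x y (ps i)) ∨ (∀ i, IsDipath r y x (ps i))) ∧
    InternallyDisjoint x y ps ∧ (∀ w : V, ∃ i, w ∈ ps i)

/-- A weak `k*`-container between `x` and `y`: `k` internally disjoint directed
paths, each from `x` to `y` or from `y` to `x`, whose union contains every
vertex. -/
def WeakStarContainer (r : V → V → Prop) (x y : V) (k : ℕ) : Prop :=
  ∃ ps : Fin k → List V, Function.Injective ps ∧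
    (∀ i, IsDipath r x y (ps i) ∨ IsDipath r y x (ps i)) ∧
    InternallyDisjoint x y ps ∧ (∀ w : V, ∃ i, w ∈ ps i)

/-- The irregularity of the digraph is at most `k`:
`|d⁺(x) − d⁻(x)| ≤ k` for every vertex `x`. -/
def IrregularityLE (r : V → V → Prop) (k : ℕ) : Prop :=
  ∀ x : V, ((({y : V | r x y}.ncard : ℤ) - ({y : V | r y x}.ncard : ℤ)).natAbs) ≤ k

/-
Camion's theorem: a strong tournament has a Hamiltonian cycle. A cycle `C` missing some
vertex can always be enlarged. A vertex `u` outside `C` with both an in- and an out-neighbour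
on `C` can be inserted between consecutive vertices `p → q` of `C` as `p → u → q`.
Otherwise every outside vertex dominates `C` or is dominated by `C`; strong connectivity then
gives an arc `b → a` from a dominated vertex to a dominating one, and `c → b → a → c'`
replaces an arc `c → c'` of `C`. Cutting the Hamiltonian cycle at `x` and `y` gives the two paths.
-/

theorem List.exists_eq_append_cons_cons {α : Type*} {P : α → Prop} {b : α} :
    ∀ {a : α} {l : List α}, P a → b ∈ l → ¬ P b →
      ∃ s u w t, a :: l = s ++ u :: w :: t ∧ P u ∧ ¬ P w
  | _, [], _, hb, _ => absurd hb List.not_mem_nil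
  | a, c :: l, ha, hb, hPb => by
    by_cases hc : P c
    · have hbl : b ∈ l := (List.mem_cons.1 hb).resolve_left (by rintro rfl; exact hPb hc)
      obtain ⟨s, u, w, t, hl, hu, hw⟩ := exists_eq_append_cons_cons hc hbl hPb
      exact ⟨a :: s, u, w, t, by rw [hl]; rfl, hu, hw⟩
    · exact ⟨[], a, c, l, rfl, ha, hc⟩

theorem Cycle.exists_eq_coe_cons {α : Type*} {a : α} {c : Cycle α} (h : a ∈ c) :
    ∃ l : List α, c = ↑(a :: l) := by
  induction c using Quotient.inductionOn' with
  | h l =>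
    obtain ⟨s, t, rfl⟩ := List.append_of_mem (Cycle.mem_coe_iff.1 h)
    exact ⟨t ++ s, Cycle.coe_eq_coe.2 List.isRotated_append⟩

theorem Cycle.exists_eq_coe_cons_cons {α : Type*} {P : α → Prop} {c : Cycle α} {a b : α}
    (ha : a ∈ c) (hPa : P a) (hb : b ∈ c) (hPb : ¬ P b) :
    ∃ u w l, c = ↑(u :: w :: l) ∧ P u ∧ ¬ P w := by
  obtain ⟨l, rfl⟩ := Cycle.exists_eq_coe_cons ha
  have hbl : b ∈ l :=
    (List.mem_cons.1 (Cycle.mem_coe_iff.1 hb)).resolve_left (by rintro rfl; exact hPb hPa)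
  obtain ⟨s, u, w, t, hl, hu, hw⟩ := List.exists_eq_append_cons_cons hPa hbl hPb
  exact ⟨u, w, t ++ s, by rw [hl]; exact Cycle.coe_eq_coe.2 List.isRotated_append, hu, hw⟩

theorem Cycle.Nodup.length_le_card {α : Type*} [Fintype α] {c : Cycle α} (h : c.Nodup) :
    c.length ≤ Fintype.card α := by
  induction c using Quotient.inductionOn' with
  | h l => exact List.Nodup.length_le_card h

namespace IsTournament

variable {r : V → V → Prop} {a b : V}

theorem ne_of_rel (hT : IsTournament r) (h : r a b) : a ≠ b := by
  rintro rfl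
  exact hT.1 a h

theorem asymm (hT : IsTournament r) (h : r a b) : ¬ r b a :=
  (hT.2 a b (hT.ne_of_rel h)).1 h

theorem rel_of_not_rel (hT : IsTournament r) (hab : a ≠ b) (h : ¬ r a b) : r b a := by
  by_contra h'
  exact h ((hT.2 a b hab).2 h')

end IsTournament

theorem StronglyConnected.exists_rel_out {r : V → V → Prop} (hs : StronglyConnected r)
    {S : Set V} {u v : V} (hu : u ∈ S) (hv : v ∉ S) : ∃ a ∈ S, ∃ b ∉ S, r a b := by
  by_contra! hclosed
  refine hv ?_
  clear hv
  induction hs u v with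
  | refl => exact hu
  | tail _ hab ih => by_contra hb; exact hclosed _ ih _ hb hab

theorem IsTournament.exists_rel_dominated_dominating {r : V → V → Prop} (hT : IsTournament r)
    (hs : StronglyConnected r) {C : Set V} {c v : V} (hc : c ∈ C) (hv : v ∉ C)
    (hsplit : ∀ u ∉ C, (∀ w ∈ C, r u w) ∨ (∀ w ∈ C, r w u)) :
    ∃ a b, (∀ w ∈ C, r a w) ∧ (∀ w ∈ C, r w b) ∧ r b a := by
  -- An arc leaving `C` enters `B`, and an arc leaving `B` enters a vertex dominating `C`.
  set B := {u | ∀ w ∈ C, r w u}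
  obtain ⟨c', hc', t, ht, hc't⟩ := hs.exists_rel_out hc hv
  have htB : t ∈ B := (hsplit t ht).resolve_left fun hdom => hT.asymm hc't (hdom c' hc')
  have hcB : c ∉ B := fun h => hT.1 c (h c hc)
  obtain ⟨b, hb, a, ha, hba⟩ := hs.exists_rel_out htB hcB
  have haC : a ∉ C := fun haC => hT.asymm hba (hb a haC)
  exact ⟨a, b, (hsplit a haC).resolve_right ha, hb, hba⟩

def IsDicycle (r : V → V → Prop) (c : Cycle V) : Prop :=
  c.Nodup ∧ c.Chain r

namespace IsDicycle

variable {r : V → V → Prop}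

theorem triangle (hT : IsTournament r) {a b x : V} (hxb : r x b) (hba : r b a) (hax : r a x) :
    IsDicycle r ↑[x, b, a] := by
  refine ⟨Cycle.nodup_coe_iff.2 ?_, by simp [hxb, hba, hax]⟩
  simp [hT.ne_of_rel hxb, (hT.ne_of_rel hax).symm, hT.ne_of_rel hba]

theorem insert {u v w : V} {l : List V} (hc : IsDicycle r ↑(u :: w :: l))
    (hv : v ∉ u :: w :: l) (huv : r u v) (hvw : r v w) : IsDicycle r ↑(u :: v :: w :: l) := by
  obtain ⟨hnd, hch⟩ := hc
  refine ⟨Cycle.nodup_coe_iff.2 ?_, ?_⟩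
  · exact (List.Perm.swap u v _).nodup_iff.1 (List.nodup_cons.2 ⟨hv, hnd⟩)
  · simp only [Cycle.chain_coe_cons, List.cons_append, List.isChain_cons_cons] at hch ⊢
    exact ⟨huv, hvw, hch.2⟩

theorem insert_two {a b x : V} {l : List V} (hc : IsDicycle r ↑(x :: l))
    (ha : a ∉ x :: l) (hb : b ∉ x :: l) (hab : a ≠ b)
    (haC : ∀ w ∈ x :: l, r a w) (hbC : ∀ w ∈ x :: l, r w b) (hba : r b a) :
    IsDicycle r ↑(x :: b :: a :: l) := by
  obtain ⟨hnd, hch⟩ := hc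
  refine ⟨Cycle.nodup_coe_iff.2 ?_, ?_⟩
  · simp only [Cycle.nodup_coe_iff, List.nodup_cons, List.mem_cons, not_or] at hnd ha hb ⊢
    exact ⟨⟨Ne.symm hb.1, Ne.symm ha.1, hnd.1⟩, ⟨hab.symm, hb.2⟩, ha.2, hnd.2⟩
  · rw [Cycle.chain_coe_cons] at hch ⊢
    refine List.isChain_cons_cons.2 ⟨hbC x (by simp), List.isChain_cons_cons.2 ⟨hba, ?_⟩⟩
    refine List.isChain_cons.2 ⟨fun w hw => haC w ?_, hch.tail⟩
    have hw' : w ∈ l ++ [x] := List.mem_of_mem_head? hw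
    rw [List.mem_append, List.mem_singleton] at hw'
    exact List.mem_cons.2 hw'.symm

theorem exists_larger (hT : IsTournament r) (hs : StronglyConnected r) {c : Cycle V}
    (hc : IsDicycle r c) {x v : V} (hx : x ∈ c) (hv : v ∉ c) :
    ∃ c', IsDicycle r c' ∧ (∀ w ∈ c, w ∈ c') ∧ c.length < c'.length := by
  by_cases hsplit : ∀ u ∉ c, (∀ w ∈ c, r u w) ∨ (∀ w ∈ c, r w u)
  · obtain ⟨a, b, haC, hbC, hba⟩ :=
      hT.exists_rel_dominated_dominating hs (C := {w | w ∈ c}) hx hv hsplit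
    obtain ⟨l, rfl⟩ := Cycle.exists_eq_coe_cons hx
    simp only [Set.mem_ofPred_eq, Cycle.mem_coe_iff] at haC hbC
    refine ⟨_, hc.insert_two (fun h => hT.1 a (haC a h)) (fun h => hT.1 b (hbC b h))
      (hT.ne_of_rel hba).symm haC hbC hba, ?_, by simp⟩
    simp only [Cycle.mem_coe_iff, List.mem_cons]
    tauto
  · push Not at hsplit
    obtain ⟨u, hu, ⟨w₁, hw₁, hw₁u⟩, ⟨w₂, hw₂, hw₂u⟩⟩ := hsplit
    obtain ⟨p, q, l, rfl, hpu, hqu⟩ := Cycle.exists_eq_coe_cons_cons (P := (r · u)) hw₁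
      (hT.rel_of_not_rel (by rintro rfl; exact hu hw₁) hw₁u) hw₂ hw₂u
    have huq : r u q := hT.rel_of_not_rel (by rintro rfl; exact hu (by simp)) hqu
    refine ⟨_, hc.insert (mt Cycle.mem_coe_iff.2 hu) hpu huq, ?_, by simp⟩
    simp only [Cycle.mem_coe_iff, List.mem_cons]
    tauto

theorem exists_dipaths {c : Cycle V} (hc : IsDicycle r c) {x y : V} (hx : x ∈ c) (hy : y ∈ c)
    (hxy : x ≠ y) :
    ∃ p q, IsDipath r x y p ∧ IsDipath r y x q ∧ (∀ w ∈ p, w ∈ q → w = x ∨ w = y) ∧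
      ∀ w ∈ c, w ∈ p ∨ w ∈ q := by
  obtain ⟨l, rfl⟩ := Cycle.exists_eq_coe_cons hx
  obtain ⟨a, b, rfl⟩ := List.append_of_mem
    ((List.mem_cons.1 (Cycle.mem_coe_iff.1 hy)).resolve_left hxy.symm)
  obtain ⟨hnd, hch⟩ := hc
  rw [Cycle.nodup_coe_iff] at hnd
  rw [Cycle.chain_coe_cons] at hch
  refine ⟨x :: a ++ [y], y :: b ++ [x], ⟨?_, ?_, rfl, ?_⟩, ⟨?_, ?_, rfl, ?_⟩, ?_, ?_⟩
  · exact hch.prefix ⟨b ++ [x], by simp⟩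
  · exact hnd.sublist (by simp)
  · exact List.getLast?_concat ..
  · exact hch.suffix ⟨x :: a, by simp⟩
  · rw [(List.perm_append_singleton _ _).nodup_iff]
    exact hnd.sublist ((List.sublist_append_right a _).cons_cons x)
  · exact List.getLast?_concat ..
  · intro w hwp hwq
    by_contra! hwxy
    have hwa : w ∈ a := by simpa [hwxy.1, hwxy.2] using hwp
    have hwb : w ∈ y :: b := by simpa [hwxy.1, hwxy.2] using hwq
    exact List.disjoint_of_nodup_append (List.nodup_cons.1 hnd).2 hwa hwb
  · intro w hw
    simp only [Cycle.mem_coe_iff, List.mem_cons, List.mem_append] at hw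
    simp only [List.mem_cons, List.mem_append]
    tauto

end IsDicycle

theorem IsTournament.exists_hamiltonian_dicycle [Fintype V] {r : V → V → Prop}
    (hT : IsTournament r) (hs : StronglyConnected r) {x y : V} (hxy : x ≠ y) :
    ∃ c, IsDicycle r c ∧ ∀ v, v ∈ c := by
  obtain ⟨a, b, hax, hxb, hba⟩ := hT.exists_rel_dominated_dominating hs (C := {x}) rfl hxy.symm
    fun u hu => by
      by_cases hux : r u x
      · exact .inl fun w hw => hw ▸ hux
      · exact .inr fun w hw => hw ▸ hT.rel_of_not_rel hu hux
  by_contra! hmissing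
  have hlong : ∀ n, ∃ c, IsDicycle r c ∧ x ∈ c ∧ n ≤ c.length := by
    intro n
    induction n with
    | zero => exact ⟨_, .triangle hT (hxb x rfl) hba (hax x rfl), by simp, Nat.zero_le _⟩
    | succ n ih =>
      obtain ⟨c, hc, hx, hn⟩ := ih
      obtain ⟨v, hv⟩ := hmissing c hc
      obtain ⟨c', hc', hsub, hlt⟩ := hc.exists_larger hT hs hx hv
      exact ⟨c', hc', hsub x hx, by omega⟩
  obtain ⟨c, hc, -, hlen⟩ := hlong (Fintype.card V + 1)
  have := hc.1.length_le_card
  omega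

theorem weakStarContainer_two_of_dipaths {r : V → V → Prop} {x y : V} {p q : List V}
    (hxy : x ≠ y) (hp : IsDipath r x y p) (hq : IsDipath r y x q)
    (hdisj : ∀ w ∈ p, w ∈ q → w = x ∨ w = y) (hcover : ∀ w, w ∈ p ∨ w ∈ q) :
    WeakStarContainer r x y 2 := by
  have hpq : p ≠ q := fun h => hxy (Option.some.inj (hp.2.2.1.symm.trans (h ▸ hq.2.2.1)))
  refine ⟨![p, q], ?_, Fin.forall_fin_two.2 ⟨.inl hp, .inr hq⟩, ?_,
    fun w => (hcover w).elim (⟨0, ·⟩) (⟨1, ·⟩)⟩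
  · intro i j
    fin_cases i <;> fin_cases j <;> simp [hpq, hpq.symm]
  · intro i j hij w hwi hwj
    fin_cases i <;> fin_cases j
    · exact absurd rfl hij
    · exact hdisj w hwi hwj
    · exact hdisj w hwj hwi
    · exact absurd rfl hij

/-- Every strongly connected tournament is 2*-weakly connected. -/
theorem stmt5 [Fintype V] (r : V → V → Prop) (hT : IsTournament r)
    (hstrong : StronglyConnected r) (x y : V) (hxy : x ≠ y) :
    WeakStarContainer r x y 2 := by
  obtain ⟨c, hc, hall⟩ := hT.exists_hamiltonian_dicycle hstrong hxy
  obtain ⟨p, q, hp, hq, hdisj, hcover⟩ := hc.exists_dipaths (hall x) (hall y) hxy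
  exact weakStarContainer_two_of_dipaths hxy hp hq hdisj fun w => hcover w (hall w)
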